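/- arXiv:2004.08409 — 4 statements merged into one kernel-verified Lean document; each statement's English description precedes it below -/
import Mathlib

section
/- Chain rule for directed information (second form): For any random variables (x_t, y_t, z_t), t = 1, ..., T, taking values in finite sets, I(x^T → (y^T, z^T)) = I(x^T → y^T ‖ z^{T-1}) + I(x^T → z^T ‖ y^T); explicitly, Σ_{t=1}^T I[x^t; (y_t, z_t) | (y^{t-1}, z^{t-1})] = Σ_{t=1}^T I[x^t; y_t | (y^{t-1}, z^{t-1})] + Σ_{t=1}^T I[x^t; z_t | (y^t, z^{t-1})]. -/
open MeasureTheory ProbabilityTheory Finset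

/-- Shannon entropy (base 2) of a random variable with values in a finite type. -/
noncomputable def shEnt {Ω : Type*} [MeasurableSpace Ω] {S : Type*} [Fintype S]
    (μ : Measure Ω) (X : Ω → S) : ℝ :=
  -∑ s : S, ((μ (X ⁻¹' {s})).toReal * Real.logb 2 (μ (X ⁻¹' {s})).toReal)

/-- Mutual information (base 2). -/
noncomputable def mutInf {Ω : Type*} [MeasurableSpace Ω] {S T : Type*} [Fintype S] [Fintype T]
    (μ : Measure Ω) (X : Ω → S) (Y : Ω → T) : ℝ :=
  shEnt μ X + shEnt μ Y - shEnt μ (fun ω => (X ω, Y ω))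

/-- Conditional mutual information (base 2), `I[X ; Y | Z]`. -/
noncomputable def condMutInf {Ω : Type*} [MeasurableSpace Ω] {S T U : Type*}
    [Fintype S] [Fintype T] [Fintype U]
    (μ : Measure Ω) (X : Ω → S) (Y : Ω → T) (Z : Ω → U) : ℝ :=
  shEnt μ (fun ω => (X ω, Z ω)) + shEnt μ (fun ω => (Y ω, Z ω))
    - shEnt μ (fun ω => (X ω, Y ω, Z ω)) - shEnt μ Z

/-- The history `a^t = (a_1, …, a_t)` of a process (0-indexed: the first `t` variables). -/
def hist {Ω : Type*} {α : ℕ → Type*} (x : (i : ℕ) → Ω → α i) (t : ℕ) :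
    Ω → ((i : Fin t) → α i) :=
  fun ω i => x i ω


lemma shEnt_congr {Ω : Type*} [MeasurableSpace Ω] {S T : Type*} [Fintype S] [Fintype T]
    (μ : Measure Ω) (X : Ω → S) (Y : Ω → T) (g : S → T) (h : T → S)
    (hg : ∀ ω, g (X ω) = Y ω) (hh : ∀ ω, h (Y ω) = X ω) :
    shEnt μ X = shEnt μ Y := by
  classical
  have key : ∀ ω₀ : Ω, X ⁻¹' {X ω₀} = Y ⁻¹' {Y ω₀} := by
    intro ω₀
    ext ω
    simp only [Set.mem_preimage, Set.mem_singleton_iff]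
    constructor
    · intro hxe; rw [← hg, ← hg, hxe]
    · intro hye; rw [← hh, ← hh, hye]
  have ne : ∀ {A : Set Ω}, μ A ≠ 0 → A.Nonempty := by
    intro A hA
    rw [Set.nonempty_iff_ne_empty]
    rintro rfl
    exact hA (measure_empty)
  unfold shEnt
  congr 1
  rw [← Finset.sum_filter_of_ne (p := fun s => μ (X ⁻¹' {s}) ≠ 0)
      (by intro s _ hne hz; exact hne (by rw [hz]; simp)),
    ← Finset.sum_filter_of_ne (s := Finset.univ (α := T))
      (p := fun t => μ (Y ⁻¹' {t}) ≠ 0)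
      (by intro s _ hne hz; exact hne (by rw [hz]; simp))]
  refine Finset.sum_bij (fun s _ => g s) ?_ ?_ ?_ ?_
  · intro s hs
    simp only [Finset.mem_filter, Finset.mem_univ, true_and] at hs ⊢
    obtain ⟨ω₀, hω₀⟩ := ne hs
    have : Y ⁻¹' {g s} = X ⁻¹' {s} := by
      rw [← hω₀, hg, ← key, hω₀]
    rwa [this]
  · intro s₁ hs₁ s₂ hs₂ hgs
    simp only [Finset.mem_filter, Finset.mem_univ, true_and] at hs₁ hs₂
    obtain ⟨ω₁, hω₁⟩ := ne hs₁
    obtain ⟨ω₂, hω₂⟩ := ne hs₂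
    have : Y ω₁ = Y ω₂ := by rw [← hg, ← hg, hω₁, hω₂]; exact hgs
    rw [← hω₁, ← hω₂, ← hh, ← hh, this]
  · intro t ht
    simp only [Finset.mem_filter, Finset.mem_univ, true_and] at ht
    obtain ⟨ω₀, hω₀⟩ := ne ht
    refine ⟨X ω₀, ?_, (hg ω₀).trans hω₀⟩
    simp only [Finset.mem_filter, Finset.mem_univ, true_and]
    rw [key, hω₀]
    exact ht
  · intro s hs
    simp only [Finset.mem_filter, Finset.mem_univ, true_and] at hs
    obtain ⟨ω₀, hω₀⟩ := ne hs
    have : Y ⁻¹' {g s} = X ⁻¹' {s} := by rw [← hω₀, hg, ← key, hω₀]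
    rw [this]

lemma snoc_hist {Ω : Type*} {β : ℕ → Type*} (y : (i : ℕ) → Ω → β i) (t : ℕ) (ω : Ω) :
    (Fin.snoc (α := fun i : Fin (t + 1) => β i) (hist y t ω) (y t ω)) = hist y (t + 1) ω := by
  funext i
  refine Fin.lastCases ?_ ?_ i
  · simp [Fin.snoc_last, hist]
  · intro j
    simp [Fin.snoc_castSucc, hist]

/-- Chain rule for directed information (second form):
`I(x^T → (y^T, z^T)) = I(x^T → y^T ‖ z^{T-1}) + I(x^T → z^T ‖ y^T)`. -/
theorem directedInfo_chain_rule_second_form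
    {Ω : Type*} [MeasurableSpace Ω] (μ : Measure Ω) [IsProbabilityMeasure μ]
    (T : ℕ) {α β γ : ℕ → Type*}
    [∀ i, Fintype (α i)] [∀ i, Fintype (β i)] [∀ i, Fintype (γ i)]
    [∀ i, MeasurableSpace (α i)] [∀ i, MeasurableSpace (β i)] [∀ i, MeasurableSpace (γ i)]
    [∀ i, MeasurableSingletonClass (α i)] [∀ i, MeasurableSingletonClass (β i)]
    [∀ i, MeasurableSingletonClass (γ i)]
    (x : (i : ℕ) → Ω → α i) (y : (i : ℕ) → Ω → β i) (z : (i : ℕ) → Ω → γ i)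
    (hx : ∀ i, Measurable (x i)) (hy : ∀ i, Measurable (y i)) (hz : ∀ i, Measurable (z i)) :
    ∑ t ∈ range T,
        condMutInf μ (hist x (t + 1)) (fun ω => (y t ω, z t ω))
          (fun ω => (hist y t ω, hist z t ω))
      = ∑ t ∈ range T,
          condMutInf μ (hist x (t + 1)) (y t) (fun ω => (hist y t ω, hist z t ω))
        + ∑ t ∈ range T,
            condMutInf μ (hist x (t + 1)) (z t) (fun ω => (hist y (t + 1) ω, hist z t ω)) := by

  rw [← Finset.sum_add_distrib]
  refine Finset.sum_congr rfl fun t _ => ?_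
  unfold condMutInf
  have e1 : shEnt μ (fun ω => (y t ω, (hist y t ω, hist z t ω)))
      = shEnt μ (fun ω => (hist y (t + 1) ω, hist z t ω)) := by
    refine shEnt_congr μ _ _
      (fun p => (Fin.snoc (α := fun i : Fin (t+1) => β i) p.2.1 p.1, p.2.2))
      (fun q => (q.1 (Fin.last t), (fun i => q.1 i.castSucc, q.2)))
      (fun ω => by simp only [snoc_hist])
      (fun ω => rfl)
  have e2 : shEnt μ (fun ω => (hist x (t+1) ω, y t ω, (hist y t ω, hist z t ω)))
      = shEnt μ (fun ω => (hist x (t+1) ω, (hist y (t + 1) ω, hist z t ω))) := by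
    refine shEnt_congr μ _ _
      (fun p => (p.1, (Fin.snoc (α := fun i : Fin (t+1) => β i) p.2.2.1 p.2.1, p.2.2.2)))
      (fun q => (q.1, (q.2.1 (Fin.last t), (fun i => q.2.1 i.castSucc, q.2.2))))
      (fun ω => by simp only [snoc_hist])
      (fun ω => rfl)
  have e3 : shEnt μ (fun ω => ((y t ω, z t ω), (hist y t ω, hist z t ω)))
      = shEnt μ (fun ω => (z t ω, (hist y (t + 1) ω, hist z t ω))) := by
    refine shEnt_congr μ _ _
      (fun p => (p.1.2, (Fin.snoc (α := fun i : Fin (t+1) => β i) p.2.1 p.1.1, p.2.2)))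
      (fun q => ((q.2.1 (Fin.last t), q.1), (fun i => q.2.1 i.castSucc, q.2.2)))
      (fun ω => by simp only [snoc_hist])
      (fun ω => rfl)
  have e4 : shEnt μ (fun ω => (hist x (t+1) ω, (y t ω, z t ω), (hist y t ω, hist z t ω)))
      = shEnt μ (fun ω => (hist x (t+1) ω, z t ω, (hist y (t + 1) ω, hist z t ω))) := by
    refine shEnt_congr μ _ _
      (fun p => (p.1, (p.2.1.2, (Fin.snoc (α := fun i : Fin (t+1) => β i) p.2.2.1 p.2.1.1, p.2.2.2))))
      (fun q => (q.1, ((q.2.2.1 (Fin.last t), q.2.1), (fun i => q.2.2.1 i.castSucc, q.2.2.2))))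
      (fun ω => by simp only [snoc_hist])
      (fun ω => rfl)
  linarith [e1, e2, e3, e4]
end

section
/- Directed information is bounded by mutual information: For any random variables (x_t, y_t), t = 1, ..., T, taking values in finite sets, I(x^T → y^T) ≤ I[x^T; y^T]; explicitly, Σ_{t=1}^T I[x^t; y_t | y^{t-1}] ≤ I[(x_1,...,x_T); (y_1,...,y_T)]. -/
open MeasureTheory ProbabilityTheory Finset

noncomputable def pmv {Ω : Type*} [MeasurableSpace Ω] {S : Type*}
    (μ : MeasureTheory.Measure Ω) (W : Ω → S) (s : S) : ℝ :=
  (μ (W ⁻¹' {s})).toReal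

lemma pmv_nonneg {Ω : Type*} [MeasurableSpace Ω] {S : Type*}
    (μ : MeasureTheory.Measure Ω) (W : Ω → S) (s : S) : 0 ≤ pmv μ W s :=
  ENNReal.toReal_nonneg

lemma gibbs {S : Type*} [Fintype S] (p q : S → ℝ) (hp : ∀ s, 0 ≤ p s)
    (hq : ∀ s, 0 ≤ q s) (hpq : ∀ s, p s ≠ 0 → q s ≠ 0)
    (hsum : ∑ s, q s ≤ ∑ s, p s) :
    ∑ s, p s * Real.logb 2 (q s) ≤ ∑ s, p s * Real.logb 2 (p s) := by
  have hlog2 : (0:ℝ) < Real.log 2 := Real.log_pos (by norm_num)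
  have key : ∀ s, p s * Real.logb 2 (q s) - p s * Real.logb 2 (p s)
      ≤ (q s - p s) / Real.log 2 := by
    intro s
    rcases eq_or_ne (p s) 0 with h | h
    · rw [h]
      simp only [zero_mul, sub_zero, sub_self]
      exact div_nonneg (hq s) hlog2.le
    · have hp' : 0 < p s := (hp s).lt_of_ne (Ne.symm h)
      have hq' : 0 < q s := (hq s).lt_of_ne (Ne.symm (hpq s h))
      have hlog : Real.log (q s / p s) ≤ q s / p s - 1 :=
        Real.log_le_sub_one_of_pos (by positivity)
      have h2 : p s * Real.log (q s / p s) ≤ q s - p s := by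
        calc p s * Real.log (q s / p s) ≤ p s * (q s / p s - 1) := by nlinarith
          _ = q s - p s := by field_simp
      have h3 : p s * Real.logb 2 (q s) - p s * Real.logb 2 (p s)
          = p s * (Real.log (q s) - Real.log (p s)) / Real.log 2 := by
        unfold Real.logb; ring
      rw [h3, ← Real.log_div hq'.ne' hp'.ne']
      rw [div_le_div_iff_of_pos_right hlog2]
      exact h2
  have hs : ∑ s, (p s * Real.logb 2 (q s) - p s * Real.logb 2 (p s))
      ≤ ∑ s, (q s - p s) / Real.log 2 :=
    Finset.sum_le_sum (fun s _ => key s)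
  rw [Finset.sum_sub_distrib] at hs
  have h4 : ∑ s, (q s - p s) / Real.log 2 ≤ 0 := by
    rw [← Finset.sum_div, Finset.sum_sub_distrib]
    apply div_nonpos_of_nonpos_of_nonneg <;> linarith
  linarith

lemma meas_partition {Ω T : Type*} [MeasurableSpace Ω] (μ : Measure Ω)
    [IsProbabilityMeasure μ] [Fintype T]
    (s : Set Ω) (hs : MeasurableSet s) (Y : Ω → T)
    (hY : ∀ b, MeasurableSet (Y ⁻¹' {b})) :
    ∑ b, (μ (s ∩ Y ⁻¹' {b})).toReal = (μ s).toReal := by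
  have hdisj : Pairwise (Function.onFun Disjoint fun b => s ∩ Y ⁻¹' {b}) := by
    intro b b' hbb'
    rw [Function.onFun, Set.disjoint_left]
    rintro ω ⟨-, h1⟩ ⟨-, h2⟩
    exact hbb' (h1.symm.trans h2)
  have hunion : (⋃ b, s ∩ Y ⁻¹' {b}) = s := by
    ext ω; simp
  have h1 : μ s = ∑ b, μ (s ∩ Y ⁻¹' {b}) := by
    conv_lhs => rw [← hunion]
    rw [measure_iUnion hdisj (fun b => hs.inter (hY b)), tsum_fintype]
  rw [h1, ENNReal.toReal_sum (fun b _ => measure_ne_top μ _)]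

lemma shEnt_eq {Ω : Type*} [MeasurableSpace Ω] {S : Type*} [Fintype S]
    (μ : Measure Ω) (X : Ω → S) :
    shEnt μ X = -∑ s : S, pmv μ X s * Real.logb 2 (pmv μ X s) := rfl

lemma shEnt_comp {Ω : Type*} [MeasurableSpace Ω] {S S' : Type*} [Fintype S] [Fintype S']
    (μ : Measure Ω) (X : Ω → S) (X' : Ω → S') (e : S → S')
    (he : Function.Injective e) (h : ∀ ω, X' ω = e (X ω)) :
    shEnt μ X' = shEnt μ X := by
  classical
  have hpre : ∀ s', X' ⁻¹' {s'} = X ⁻¹' (e ⁻¹' {s'}) := by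
    intro s'; ext ω; simp [h ω]
  unfold shEnt
  congr 1
  have h0 : ∀ s' ∈ Finset.univ, s' ∉ Finset.univ.image e →
      (μ (X' ⁻¹' {s'})).toReal * Real.logb 2 (μ (X' ⁻¹' {s'})).toReal = 0 := by
    intro s' _ hs'
    have : X' ⁻¹' {s'} = ∅ := by
      rw [hpre]
      ext ω; simp only [Set.mem_preimage, Set.mem_singleton_iff, Set.mem_empty_iff_false,
        iff_false]
      intro hc
      exact hs' (Finset.mem_image.mpr ⟨X ω, Finset.mem_univ _, hc⟩)
    rw [this]
    simp
  calc ∑ s' : S', (μ (X' ⁻¹' {s'})).toReal * Real.logb 2 (μ (X' ⁻¹' {s'})).toReal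
      = ∑ s' ∈ Finset.univ.image e,
          (μ (X' ⁻¹' {s'})).toReal * Real.logb 2 (μ (X' ⁻¹' {s'})).toReal :=
        (Finset.sum_subset (Finset.subset_univ _) h0).symm
    _ = ∑ s : S, (μ (X' ⁻¹' {e s})).toReal * Real.logb 2 (μ (X' ⁻¹' {e s})).toReal :=
        Finset.sum_image (fun a _ b _ hab => he hab)
    _ = ∑ s : S, (μ (X ⁻¹' {s})).toReal * Real.logb 2 (μ (X ⁻¹' {s})).toReal := by
        apply Finset.sum_congr rfl
        intro s _
        have : X' ⁻¹' {e s} = X ⁻¹' {s} := by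
          rw [hpre]; ext ω; simp [he.eq_iff]
        rw [this]

lemma sum_prod3 {S T U M : Type*} [Fintype S] [Fintype T] [Fintype U] [AddCommMonoid M]
    (f : S × T × U → M) :
    ∑ s, f s = ∑ c, ∑ a, ∑ b, f (a, b, c) := by
  rw [Fintype.sum_prod_type]
  simp_rw [Fintype.sum_prod_type]
  calc ∑ a, ∑ b, ∑ c, f (a, b, c)
      = ∑ a, ∑ c, ∑ b, f (a, b, c) :=
        Finset.sum_congr rfl (fun a _ => Finset.sum_comm)
    _ = ∑ c, ∑ a, ∑ b, f (a, b, c) := Finset.sum_comm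

lemma sum_prod3' {S T U M : Type*} [Fintype S] [Fintype T] [Fintype U] [AddCommMonoid M]
    (f : S × T × U → M) :
    ∑ s, f s = ∑ a, ∑ c, ∑ b, f (a, b, c) := by
  rw [Fintype.sum_prod_type]
  simp_rw [Fintype.sum_prod_type]
  exact Finset.sum_congr rfl (fun a _ => Finset.sum_comm)

lemma sum_prod3'' {S T U M : Type*} [Fintype S] [Fintype T] [Fintype U] [AddCommMonoid M]
    (f : S × T × U → M) :
    ∑ s, f s = ∑ b, ∑ c, ∑ a, f (a, b, c) := by
  rw [sum_prod3]
  calc ∑ c, ∑ a, ∑ b, f (a, b, c)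
      = ∑ c, ∑ b, ∑ a, f (a, b, c) :=
        Finset.sum_congr rfl (fun c _ => Finset.sum_comm)
    _ = ∑ b, ∑ c, ∑ a, f (a, b, c) := Finset.sum_comm

lemma shEnt_submodular {Ω S T U : Type*} [MeasurableSpace Ω]
    (μ : Measure Ω) [IsProbabilityMeasure μ]
    [Fintype S] [Fintype T] [Fintype U]
    (X : Ω → S) (Y : Ω → T) (Z : Ω → U)
    (hX : ∀ a, MeasurableSet (X ⁻¹' {a}))
    (hY : ∀ b, MeasurableSet (Y ⁻¹' {b}))
    (hZ : ∀ c, MeasurableSet (Z ⁻¹' {c})) :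
    shEnt μ (fun ω => (X ω, Y ω, Z ω)) + shEnt μ Z
      ≤ shEnt μ (fun ω => (X ω, Z ω)) + shEnt μ (fun ω => (Y ω, Z ω)) := by
  set p : S × T × U → ℝ := pmv μ (fun ω => (X ω, Y ω, Z ω)) with hp_def
  set pXZ : S × U → ℝ := pmv μ (fun ω => (X ω, Z ω)) with hpXZ_def
  set pYZ : T × U → ℝ := pmv μ (fun ω => (Y ω, Z ω)) with hpYZ_def
  set pZ : U → ℝ := pmv μ Z with hpZ_def
  -- preimage identities
  have pre3 : ∀ a b c, (fun ω => (X ω, Y ω, Z ω)) ⁻¹' {(a, b, c)}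
      = (X ⁻¹' {a} ∩ Z ⁻¹' {c}) ∩ Y ⁻¹' {b} := by
    intro a b c; ext ω
    simp only [Set.mem_preimage, Set.mem_singleton_iff, Prod.mk.injEq, Set.mem_inter_iff]
    tauto
  have pre3' : ∀ a b c, (fun ω => (X ω, Y ω, Z ω)) ⁻¹' {(a, b, c)}
      = (Y ⁻¹' {b} ∩ Z ⁻¹' {c}) ∩ X ⁻¹' {a} := by
    intro a b c; ext ω
    simp only [Set.mem_preimage, Set.mem_singleton_iff, Prod.mk.injEq, Set.mem_inter_iff]
    tauto
  have preXZ : ∀ a c, (fun ω => (X ω, Z ω)) ⁻¹' {(a, c)} = Z ⁻¹' {c} ∩ X ⁻¹' {a} := by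
    intro a c; ext ω
    simp only [Set.mem_preimage, Set.mem_singleton_iff, Prod.mk.injEq, Set.mem_inter_iff]
    tauto
  have preYZ : ∀ b c, (fun ω => (Y ω, Z ω)) ⁻¹' {(b, c)} = Z ⁻¹' {c} ∩ Y ⁻¹' {b} := by
    intro b c; ext ω
    simp only [Set.mem_preimage, Set.mem_singleton_iff, Prod.mk.injEq, Set.mem_inter_iff]
    tauto
  -- marginals
  have mXZ : ∀ a c, ∑ b, p (a, b, c) = pXZ (a, c) := by
    intro a c
    have : ∀ b, p (a, b, c) = (μ ((X ⁻¹' {a} ∩ Z ⁻¹' {c}) ∩ Y ⁻¹' {b})).toReal := by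
      intro b; rw [hp_def]; unfold pmv; rw [pre3]
    simp_rw [this]
    rw [meas_partition μ _ ((hX a).inter (hZ c)) Y hY]
    rw [hpXZ_def]; unfold pmv; rw [preXZ, Set.inter_comm]
  have mYZ : ∀ b c, ∑ a, p (a, b, c) = pYZ (b, c) := by
    intro b c
    have : ∀ a, p (a, b, c) = (μ ((Y ⁻¹' {b} ∩ Z ⁻¹' {c}) ∩ X ⁻¹' {a})).toReal := by
      intro a; rw [hp_def]; unfold pmv; rw [pre3']
    simp_rw [this]
    rw [meas_partition μ _ ((hY b).inter (hZ c)) X hX]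
    rw [hpYZ_def]; unfold pmv; rw [preYZ, Set.inter_comm]
  have mZX : ∀ c, ∑ a, pXZ (a, c) = pZ c := by
    intro c
    have : ∀ a, pXZ (a, c) = (μ (Z ⁻¹' {c} ∩ X ⁻¹' {a})).toReal := by
      intro a; rw [hpXZ_def]; unfold pmv; rw [preXZ]
    simp_rw [this]
    exact meas_partition μ _ (hZ c) X hX
  have mZY : ∀ c, ∑ b, pYZ (b, c) = pZ c := by
    intro c
    have : ∀ b, pYZ (b, c) = (μ (Z ⁻¹' {c} ∩ Y ⁻¹' {b})).toReal := by
      intro b; rw [hpYZ_def]; unfold pmv; rw [preYZ]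
    simp_rw [this]
    exact meas_partition μ _ (hZ c) Y hY
  -- nonnegativity
  have hp0 : ∀ s, 0 ≤ p s := fun s => pmv_nonneg μ _ s
  have hpXZ0 : ∀ s, 0 ≤ pXZ s := fun s => pmv_nonneg μ _ s
  have hpYZ0 : ∀ s, 0 ≤ pYZ s := fun s => pmv_nonneg μ _ s
  have hpZ0 : ∀ c, 0 ≤ pZ c := fun c => pmv_nonneg μ _ c
  -- pointwise bounds
  have hle1 : ∀ a b c, p (a, b, c) ≤ pXZ (a, c) := by
    intro a b c
    rw [← mXZ a c]
    exact Finset.single_le_sum (fun b _ => hp0 (a, b, c)) (Finset.mem_univ b)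
  have hle2 : ∀ a b c, p (a, b, c) ≤ pYZ (b, c) := by
    intro a b c
    rw [← mYZ b c]
    exact Finset.single_le_sum (fun a _ => hp0 (a, b, c)) (Finset.mem_univ a)
  have hle3 : ∀ a c, pXZ (a, c) ≤ pZ c := by
    intro a c
    rw [← mZX c]
    exact Finset.single_le_sum (fun a _ => hpXZ0 (a, c)) (Finset.mem_univ a)
  -- the comparison distribution
  set q : S × T × U → ℝ := fun s =>
    if pZ s.2.2 = 0 then 0 else pXZ (s.1, s.2.2) * pYZ (s.2.1, s.2.2) / pZ s.2.2 with hq_def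
  have hq0 : ∀ s, 0 ≤ q s := by
    intro s; rw [hq_def]
    dsimp only
    split
    · exact le_refl 0
    · exact div_nonneg (mul_nonneg (hpXZ0 _) (hpYZ0 _)) (hpZ0 _)
  have hppos : ∀ a b c, p (a, b, c) ≠ 0 →
      0 < pXZ (a, c) ∧ 0 < pYZ (b, c) ∧ 0 < pZ c := by
    intro a b c h
    have h1 : 0 < p (a, b, c) := (hp0 _).lt_of_ne (Ne.symm h)
    exact ⟨h1.trans_le (hle1 a b c), h1.trans_le (hle2 a b c),
      (h1.trans_le (hle1 a b c)).trans_le (hle3 a c)⟩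
  have hpq : ∀ s, p s ≠ 0 → q s ≠ 0 := by
    rintro ⟨a, b, c⟩ h
    obtain ⟨h1, h2, h3⟩ := hppos a b c h
    rw [hq_def]
    dsimp only
    rw [if_neg h3.ne']
    positivity
  have hsum : ∑ s, q s ≤ ∑ s, p s := by
    rw [sum_prod3 q, sum_prod3 p]
    apply Finset.sum_le_sum
    intro c _
    rcases eq_or_ne (pZ c) 0 with h | h
    · have : ∀ a b, q (a, b, c) = 0 := by
        intro a b; rw [hq_def]; dsimp only; rw [if_pos h]
      simp only [this, Finset.sum_const_zero]
      apply Finset.sum_nonneg; intro a _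
      apply Finset.sum_nonneg; intro b _
      exact hp0 _
    · have : ∀ a b, q (a, b, c) = pXZ (a, c) * pYZ (b, c) / pZ c := by
        intro a b; rw [hq_def]; dsimp only; rw [if_neg h]
      simp_rw [this, mXZ]
      have : ∀ a, ∑ b, pXZ (a, c) * pYZ (b, c) / pZ c = pXZ (a, c) := by
        intro a
        rw [← Finset.sum_div, ← Finset.mul_sum, mZY c, mul_div_assoc,
          div_self h, mul_one]
      simp_rw [this]
      rw [mZX c]
  -- Gibbs
  have hgibbs := gibbs p q hp0 hq0 hpq hsum
  -- expand the left side of Gibbs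
  have expand : ∀ a b c, p (a, b, c) * Real.logb 2 (q (a, b, c))
      = p (a, b, c) * Real.logb 2 (pXZ (a, c))
        + p (a, b, c) * Real.logb 2 (pYZ (b, c))
        - p (a, b, c) * Real.logb 2 (pZ c) := by
    intro a b c
    rcases eq_or_ne (p (a, b, c)) 0 with h | h
    · rw [h]; ring
    · obtain ⟨h1, h2, h3⟩ := hppos a b c h
      have hqv : q (a, b, c) = pXZ (a, c) * pYZ (b, c) / pZ c := by
        rw [hq_def]; dsimp only; rw [if_neg h3.ne']
      rw [hqv, Real.logb_div (by positivity) h3.ne',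
        Real.logb_mul h1.ne' h2.ne']
      ring
  have hT1 : ∑ s : S × T × U, p s * Real.logb 2 (pXZ (s.1, s.2.2))
      = ∑ w : S × U, pXZ w * Real.logb 2 (pXZ w) := by
    rw [sum_prod3' (fun s => p s * Real.logb 2 (pXZ (s.1, s.2.2)))]
    simp_rw [← Finset.sum_mul, mXZ]
    rw [Fintype.sum_prod_type]
  have hT2 : ∑ s : S × T × U, p s * Real.logb 2 (pYZ (s.2.1, s.2.2))
      = ∑ w : T × U, pYZ w * Real.logb 2 (pYZ w) := by
    rw [sum_prod3'' (fun s => p s * Real.logb 2 (pYZ (s.2.1, s.2.2)))]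
    simp_rw [← Finset.sum_mul, mYZ]
    rw [Fintype.sum_prod_type]
  have hT3 : ∑ s : S × T × U, p s * Real.logb 2 (pZ s.2.2)
      = ∑ c, pZ c * Real.logb 2 (pZ c) := by
    rw [sum_prod3 (fun s => p s * Real.logb 2 (pZ s.2.2))]
    simp_rw [← Finset.sum_mul, mXZ, mZX]
  have hexp : ∑ s : S × T × U, p s * Real.logb 2 (q s)
      = ∑ w : S × U, pXZ w * Real.logb 2 (pXZ w)
        + ∑ w : T × U, pYZ w * Real.logb 2 (pYZ w)
        - ∑ c, pZ c * Real.logb 2 (pZ c) := by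
    rw [← hT1, ← hT2, ← hT3, ← Finset.sum_add_distrib, ← Finset.sum_sub_distrib]
    apply Finset.sum_congr rfl
    rintro ⟨a, b, c⟩ _
    exact expand a b c
  rw [hexp] at hgibbs
  rw [shEnt_eq μ (fun ω => (X ω, Y ω, Z ω)), shEnt_eq μ Z,
    shEnt_eq μ (fun ω => (X ω, Z ω)), shEnt_eq μ (fun ω => (Y ω, Z ω))]
  rw [← hp_def, ← hpXZ_def, ← hpYZ_def, ← hpZ_def]
  linarith

lemma hist_preimage_ms {Ω : Type*} [MeasurableSpace Ω] {α : ℕ → Type*}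
    [∀ i, MeasurableSpace (α i)] [∀ i, MeasurableSingletonClass (α i)]
    (x : (i : ℕ) → Ω → α i) (hx : ∀ i, Measurable (x i)) (t : ℕ)
    (f : (i : Fin t) → α i) : MeasurableSet (hist x t ⁻¹' {f}) := by
  have h : hist x t ⁻¹' {f} = ⋂ i : Fin t, (x i) ⁻¹' {f i} := by
    ext ω
    simp [hist, funext_iff]
  rw [h]
  exact MeasurableSet.iInter (fun i => (hx i) (measurableSet_singleton (f i)))

lemma pair_preimage {Ω W1 W2 : Type*} (X : Ω → W1) (Z : Ω → W2) (a : W1) (c : W2) :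
    (fun ω => (X ω, Z ω)) ⁻¹' {(a, c)} = X ⁻¹' {a} ∩ Z ⁻¹' {c} := by
  ext ω
  simp only [Set.mem_preimage, Set.mem_singleton_iff, Prod.mk.injEq, Set.mem_inter_iff]

lemma shEnt_hist_zero {Ω : Type*} [MeasurableSpace Ω] (μ : Measure Ω)
    [IsProbabilityMeasure μ] {β : ℕ → Type*} [∀ i, Fintype (β i)]
    (y : (i : ℕ) → Ω → β i) : shEnt μ (hist y 0) = 0 := by
  have h : ∀ s : (i : Fin 0) → β i, (hist y 0) ⁻¹' {s} = Set.univ := by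
    intro s
    ext ω
    simp only [Set.mem_preimage, Set.mem_singleton_iff, Set.mem_univ, iff_true]
    exact Subsingleton.elim _ _
  simp [shEnt, h]

/-- Directed information is bounded from above by mutual information:
`I(x^T → y^T) ≤ I[x^T ; y^T]`. -/
theorem directedInfo_le_mutInf
    {Ω : Type*} [MeasurableSpace Ω] (μ : Measure Ω) [IsProbabilityMeasure μ]
    (T : ℕ) {α β : ℕ → Type*}
    [∀ i, Fintype (α i)] [∀ i, Fintype (β i)]
    [∀ i, MeasurableSpace (α i)] [∀ i, MeasurableSpace (β i)]
    [∀ i, MeasurableSingletonClass (α i)] [∀ i, MeasurableSingletonClass (β i)]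
    (x : (i : ℕ) → Ω → α i) (y : (i : ℕ) → Ω → β i)
    (hx : ∀ i, Measurable (x i)) (hy : ∀ i, Measurable (y i)) :
    ∑ t ∈ range T, condMutInf μ (hist x (t + 1)) (y t) (hist y t)
      ≤ mutInf μ (hist x T) (hist y T) := by
  set A : ℕ → ℝ := fun t => shEnt μ (fun ω => (hist x T ω, hist y t ω)) with hA_def
  set B : ℕ → ℝ := fun t => shEnt μ (hist y t) with hB_def
  have key : ∀ t ∈ range T,
      condMutInf μ (hist x (t + 1)) (y t) (hist y t)
        ≤ (A t - A (t + 1)) + (B (t + 1) - B t) := by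
    intro t htmem
    have ht : t + 1 ≤ T := Nat.succ_le_of_lt (Finset.mem_range.mp htmem)
    -- the "restriction" map
    set g : ((i : Fin T) → α i) → ((i : Fin (t + 1)) → α i) :=
      fun f i => f ⟨i.1, lt_of_lt_of_le i.2 ht⟩ with hg_def
    have hgx : ∀ ω, hist x (t + 1) ω = g (hist x T ω) := fun ω => rfl
    -- the "snoc split" map for β
    set e1 : ((i : Fin (t + 1)) → β i) → β t × ((i : Fin t) → β i) :=
      fun f => (f ⟨t, Nat.lt_succ_self t⟩, fun i => f ⟨i.1, Nat.lt_succ_of_lt i.2⟩)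
      with he1_def
    have he1 : Function.Injective e1 := by
      intro f f' h
      have h1 := congrArg Prod.fst h
      have h2 := congrArg Prod.snd h
      funext i
      by_cases hi : (i : ℕ) < t
      · exact congrFun h2 ⟨i.1, hi⟩
      · have hi2 : (i : ℕ) < t + 1 := i.2
        have hit : i = ⟨t, Nat.lt_succ_self t⟩ := Fin.ext (show (i : ℕ) = t by omega)
        rw [hit]
        exact h1
    have he1y : ∀ ω, (y t ω, hist y t ω) = e1 (hist y (t + 1) ω) := fun ω => rfl
    -- F1
    have hF1 : shEnt μ (fun ω => (y t ω, hist y t ω)) = B (t + 1) :=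
      shEnt_comp μ (hist y (t + 1)) _ e1 he1 he1y
    -- F2
    have hF2 : shEnt μ (fun ω => (hist x T ω, y t ω, hist y t ω)) = A (t + 1) := by
      refine shEnt_comp μ (fun ω => (hist x T ω, hist y (t + 1) ω)) _
        (fun w => (w.1, e1 w.2)) ?_ (fun ω => rfl)
      intro w w' h
      simp only [Prod.mk.injEq] at h
      exact Prod.ext h.1 (he1 h.2)
    -- measurability facts
    have hXTms : ∀ a, MeasurableSet ((hist x T) ⁻¹' {a}) := hist_preimage_ms x hx T
    have hytms : ∀ b, MeasurableSet ((y t) ⁻¹' {b}) :=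
      fun b => (hy t) (measurableSet_singleton b)
    have hZms : ∀ c : ((i : Fin (t + 1)) → α i) × ((i : Fin t) → β i),
        MeasurableSet ((fun ω => (hist x (t + 1) ω, hist y t ω)) ⁻¹' {c}) := by
      rintro ⟨c1, c2⟩
      rw [pair_preimage]
      exact (hist_preimage_ms x hx (t + 1) c1).inter (hist_preimage_ms y hy t c2)
    -- submodularity
    have hsub := shEnt_submodular μ (hist x T) (y t)
      (fun ω => (hist x (t + 1) ω, hist y t ω)) hXTms hytms hZms
    -- F4
    have hF4 : shEnt μ (fun ω => (hist x T ω, y t ω, (hist x (t + 1) ω, hist y t ω)))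
        = shEnt μ (fun ω => (hist x T ω, y t ω, hist y t ω)) := by
      refine shEnt_comp μ _ _
        (fun w : ((i : Fin T) → α i) × (β t) × ((i : Fin t) → β i) =>
          (w.1, w.2.1, (g w.1, w.2.2))) ?_ (fun ω => rfl)
      intro w w' h
      simp only [Prod.mk.injEq] at h
      exact Prod.ext h.1 (Prod.ext h.2.1 h.2.2.2)
    -- F5
    have hF5 : shEnt μ (fun ω => (hist x T ω, (hist x (t + 1) ω, hist y t ω))) = A t := by
      refine shEnt_comp μ (fun ω => (hist x T ω, hist y t ω)) _
        (fun w => (w.1, (g w.1, w.2))) ?_ (fun ω => rfl)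
      intro w w' h
      simp only [Prod.mk.injEq] at h
      exact Prod.ext h.1 h.2.2
    -- F6
    have hF6 : shEnt μ (fun ω => (y t ω, (hist x (t + 1) ω, hist y t ω)))
        = shEnt μ (fun ω => (hist x (t + 1) ω, y t ω, hist y t ω)) := by
      refine shEnt_comp μ _ _
        (fun w : ((i : Fin (t + 1)) → α i) × (β t) × ((i : Fin t) → β i) =>
          (w.2.1, (w.1, w.2.2))) ?_ (fun ω => rfl)
      intro w w' h
      simp only [Prod.mk.injEq] at h
      exact Prod.ext h.2.1 (Prod.ext h.1 h.2.2)
    rw [hF4, hF5, hF6] at hsub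
    unfold condMutInf
    rw [hF1]
    rw [hB_def]
    linarith
  calc ∑ t ∈ range T, condMutInf μ (hist x (t + 1)) (y t) (hist y t)
      ≤ ∑ t ∈ range T, ((A t - A (t + 1)) + (B (t + 1) - B t)) :=
        Finset.sum_le_sum key
    _ = (A 0 - A T) + (B T - B 0) := by
        rw [Finset.sum_add_distrib, Finset.sum_range_sub' A T, Finset.sum_range_sub B T]
    _ = mutInf μ (hist x T) (hist y T) := by
        have hA0 : A 0 = shEnt μ (hist x T) := by
          rw [hA_def]
          exact shEnt_comp μ (hist x T) _ (fun a => (a, fun i => i.elim0))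
            (fun a a' h => congrArg Prod.fst h)
            (fun ω => Prod.ext rfl (Subsingleton.elim _ _))
        have hB0 : B 0 = 0 := shEnt_hist_zero μ y
        rw [hA0, hB0, hA_def, hB_def]
        unfold mutInf
        ring
end

section
/- Rate converse for causal coding with decoder side information (informational core of Theorem 5): Let (x_t)_{t=1}^T and (w_t)_{t=1}^T be random variables taking values in finite sets, and for each t let a_t take values in a finite set A_t and be measurable with respect to the σ-algebra generated by (x_1,...,x_t) (a deterministic causal encoding of x^t). Assume that for every t the pair (x^t, a^{t-1}) is conditionally independent of w_t given (a^t, w^{t-1}). Then Σ_{t=1}^T log₂(card A_t) ≥ Σ_{t=1}^T I[x^t; w_t | w^{t-1}], i.e., the total rate is at least the directed information I(x^T → w^T). -/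
open MeasureTheory ProbabilityTheory Finset

theorem hist_measurable {Ω : Type*} [MeasurableSpace Ω] {α : ℕ → Type*}
    [∀ i, MeasurableSpace (α i)]
    (x : (i : ℕ) → Ω → α i) (hx : ∀ i, Measurable (x i)) (t : ℕ) :
    Measurable (hist x t) :=
  measurable_pi_lambda _ fun j => hx j

/-! Step `t` is controlled by the Markov condition and the chain rule:
`I[x^t; w_t | w^{t-1}] ≤ I[(x^t, a^{t-1}); w_t | w^{t-1}] = I[a^t; w_t | w^{t-1}]
  + I[(x^t, a^{t-1}); w_t | a^t, w^{t-1}]`, where the last term vanishes, and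
`I[a^t; w_t | w^{t-1}] ≤ I[a^T; w_t | w^{t-1}]`. Summing over `t`, the chain rule for mutual
information turns the right-hand sides into `I[a^T; w^T] ≤ H(a^T) ≤ log₂ |A_1 × ⋯ × A_T|`.
All entropy inequalities come from Gibbs' inequality comparing the law of `(X, Y, Z)` with the
law that makes `X` and `Y` conditionally independent given `Z`. -/

open Real

lemma mul_logb_le_mul_logb_add {p q : ℝ} (hp : 0 ≤ p) (hq : 0 ≤ q) (hpq : p ≠ 0 → q ≠ 0) :
    p * logb 2 q ≤ p * logb 2 p + (q - p) / log 2 := by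
  have hlog2 : 0 < log 2 := log_pos one_lt_two
  rcases hp.eq_or_lt with rfl | hp
  · simpa using div_nonneg hq hlog2.le
  have hq : 0 < q := hq.lt_of_ne' (hpq hp.ne')
  have key : p * (log q - log p) ≤ q - p :=
    calc p * (log q - log p) = p * log (q / p) := by rw [log_div hq.ne' hp.ne']
      _ ≤ p * (q / p - 1) :=
          mul_le_mul_of_nonneg_left (log_le_sub_one_of_pos (div_pos hq hp)) hp.le
      _ = q - p := by field_simp
  rw [logb, logb, ← sub_nonneg]
  calc 0 ≤ (q - p - p * (log q - log p)) / log 2 := div_nonneg (by linarith) hlog2.le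
    _ = _ := by ring

lemma sum_mul_logb_le_sum_mul_logb {ι : Type*} [Fintype ι] {p q : ι → ℝ} (hp : ∀ i, 0 ≤ p i)
    (hq : ∀ i, 0 ≤ q i) (hpq : ∀ i, p i ≠ 0 → q i ≠ 0) (hsum : ∑ i, q i ≤ ∑ i, p i) :
    ∑ i, p i * logb 2 (q i) ≤ ∑ i, p i * logb 2 (p i) := by
  have hlog2 : 0 < log 2 := log_pos one_lt_two
  calc ∑ i, p i * logb 2 (q i) ≤ ∑ i, (p i * logb 2 (p i) + (q i - p i) / log 2) :=
        sum_le_sum fun i _ => mul_logb_le_mul_logb_add (hp i) (hq i) (hpq i)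
    _ = ∑ i, p i * logb 2 (p i) + (∑ i, q i - ∑ i, p i) / log 2 := by
        rw [sum_add_distrib, ← sum_div, sum_sub_distrib]
    _ ≤ ∑ i, p i * logb 2 (p i) :=
        add_le_of_nonpos_right (div_nonpos_of_nonpos_of_nonneg (by linarith) hlog2.le)

section ProbMass

variable {Ω : Type*} [MeasurableSpace Ω] {μ : Measure Ω} {S S' : Type*}

noncomputable def probMass (μ : Measure Ω) (X : Ω → S) (s : S) : ℝ := μ.real (X ⁻¹' {s})

lemma probMass_nonneg (X : Ω → S) (s : S) : 0 ≤ probMass μ X s := measureReal_nonneg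

lemma shEnt_eq_neg_sum_probMass [Fintype S] (X : Ω → S) :
    shEnt μ X = -∑ s, probMass μ X s * logb 2 (probMass μ X s) := rfl

lemma shEnt_comp_of_injective [Fintype S] [Fintype S'] {g : S → S'} (hg : Function.Injective g)
    (X : Ω → S) : shEnt μ (fun ω => g (X ω)) = shEnt μ X := by
  refine congrArg Neg.neg (Fintype.sum_of_injective g hg _ _ (fun s' hs' => ?_) fun s => ?_).symm
  · have : (fun ω => g (X ω)) ⁻¹' {s'} = ∅ :=
      Set.eq_empty_of_forall_notMem fun ω hω => hs' ⟨X ω, hω⟩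
    simp [this]
  · have : (fun ω => g (X ω)) ⁻¹' {g s} = X ⁻¹' {s} := by ext ω; simp [hg.eq_iff]
    rw [this]

variable [IsFiniteMeasure μ]

lemma probMass_le_probMass_comp (g : S → S') (X : Ω → S) (s : S) :
    probMass μ X s ≤ probMass μ (fun ω => g (X ω)) (g s) :=
  measureReal_mono fun ω (hω : X ω = s) => congrArg g hω

lemma probMass_pos_comp (g : S → S') {X : Ω → S} {s : S} (h : 0 < probMass μ X s) :
    0 < probMass μ (fun ω => g (X ω)) (g s) :=
  h.trans_le (probMass_le_probMass_comp g X s)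

variable [Fintype S] [MeasurableSpace S] [MeasurableSingletonClass S] {X : Ω → S}

lemma sum_probMass (hX : Measurable X) : ∑ s, probMass μ X s = μ.real Set.univ := by
  simp only [probMass]
  rw [sum_measureReal_preimage_singleton _ fun s _ => hX (measurableSet_singleton s)]
  simp

lemma sum_probMass_prod_left {U : Type*} (hX : Measurable X) (Z : Ω → U) (u : U) :
    ∑ s, probMass μ (fun ω => (X ω, Z ω)) (s, u) = probMass μ Z u := by
  have h := sum_probMass (μ := μ.restrict (Z ⁻¹' {u})) hX
  simp only [probMass, measureReal_restrict_apply (hX (measurableSet_singleton _)),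
    measureReal_restrict_apply_univ] at h
  simpa only [probMass, ← Set.singleton_prod_singleton, Set.mk_preimage_prod] using h

lemma sum_probMass_mul_comp [Fintype S'] (hX : Measurable X) (g : S → S') (c : S' → ℝ) :
    ∑ s, probMass μ X s * c (g s) = ∑ s', probMass μ (fun ω => g (X ω)) s' * c s' := by
  classical
  have hfiber (s' : S') : probMass μ (fun ω => g (X ω)) s' = ∑ s with g s = s', probMass μ X s := by
    simp only [probMass]
    rw [sum_measureReal_preimage_singleton _ fun s _ => hX (measurableSet_singleton s)]
    congr 1
    ext ω
    simp
  simp only [hfiber, sum_mul]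
  rw [← sum_fiberwise univ g]
  exact sum_congr rfl fun s' _ => sum_congr rfl fun s hs => by rw [(mem_filter.mp hs).2]

end ProbMass

section Entropy

variable {Ω : Type*} [MeasurableSpace Ω] {μ : Measure Ω} {S : Type*} [Fintype S]

lemma shEnt_eq_zero_of_unique [IsProbabilityMeasure μ] [Unique S] (X : Ω → S) : shEnt μ X = 0 := by
  have : X ⁻¹' {default} = Set.univ := Set.eq_univ_of_forall fun ω => Unique.eq_default (X ω)
  simp [shEnt_eq_neg_sum_probMass, probMass, this]

variable [MeasurableSpace S] [MeasurableSingletonClass S] {X : Ω → S}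

lemma shEnt_comp_eq_neg_sum [IsFiniteMeasure μ] {S' : Type*} [Fintype S'] (hX : Measurable X)
    (g : S → S') :
    shEnt μ (fun ω => g (X ω))
      = -∑ s, probMass μ X s * logb 2 (probMass μ (fun ω => g (X ω)) (g s)) := by
  rw [shEnt_eq_neg_sum_probMass,
    sum_probMass_mul_comp hX g fun s' => logb 2 (probMass μ (fun ω => g (X ω)) s')]

lemma shEnt_le_logb_card [IsProbabilityMeasure μ] (hX : Measurable X) :
    shEnt μ X ≤ logb 2 (Fintype.card S) := by
  have : Nonempty S := ⟨X (nonempty_of_isProbabilityMeasure μ).some⟩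
  have hcard : (0 : ℝ) < Fintype.card S := by exact_mod_cast Fintype.card_pos
  have hgibbs := sum_mul_logb_le_sum_mul_logb (q := fun _ => (Fintype.card S : ℝ)⁻¹)
    (probMass_nonneg (μ := μ) X) (fun _ => by positivity) (fun _ _ => by positivity)
    (by simp [sum_probMass hX, hcard.ne'])
  rw [← sum_mul, sum_probMass hX, probReal_univ, one_mul, logb_inv] at hgibbs
  rw [shEnt_eq_neg_sum_probMass]
  linarith

end Entropy

section CondMutInf

variable {Ω : Type*} [MeasurableSpace Ω] {μ : Measure Ω} [IsFiniteMeasure μ] {S T U : Type*}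

/-- `P(X = s, Z = u) P(Y = t, Z = u) / P(Z = u)`: the law with the same `(X, Z)` and `(Y, Z)`
marginals under which `X` and `Y` are conditionally independent given `Z`. The conditional mutual
information is the relative entropy of the law of `(X, Y, Z)` with respect to it. -/
noncomputable def condIndepMass (μ : Measure Ω) (X : Ω → S) (Y : Ω → T) (Z : Ω → U)
    (v : S × T × U) : ℝ :=
  probMass μ (fun ω => (X ω, Z ω)) (v.1, v.2.2) * probMass μ (fun ω => (Y ω, Z ω)) v.2
    / probMass μ Z v.2.2

variable {X : Ω → S} {Y : Ω → T} {Z : Ω → U}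

lemma condIndepMass_eq_probMass
    (h : ∀ v, probMass μ (fun ω => (X ω, Y ω, Z ω)) v * probMass μ Z v.2.2
      = probMass μ (fun ω => (X ω, Z ω)) (v.1, v.2.2) * probMass μ (fun ω => (Y ω, Z ω)) v.2)
    (v : S × T × U) : condIndepMass μ X Y Z v = probMass μ (fun ω => (X ω, Y ω, Z ω)) v := by
  rw [condIndepMass, ← h v]
  rcases eq_or_ne (probMass μ Z v.2.2) 0 with hZ | hZ
  · have hle : probMass μ (fun ω => (X ω, Y ω, Z ω)) v ≤ probMass μ Z v.2.2 :=
      probMass_le_probMass_comp (fun v => v.2.2) _ v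
    rw [hZ, div_zero]
    exact (le_antisymm (hZ ▸ hle) (probMass_nonneg _ v)).symm
  · exact mul_div_cancel_right₀ _ hZ

variable [Fintype S] [Fintype T] [Fintype U]
  [MeasurableSpace S] [MeasurableSpace T] [MeasurableSpace U]
  [MeasurableSingletonClass S] [MeasurableSingletonClass T] [MeasurableSingletonClass U]

lemma condMutInf_eq_sum (hX : Measurable X) (hY : Measurable Y) (hZ : Measurable Z) :
    condMutInf μ X Y Z = ∑ v, probMass μ (fun ω => (X ω, Y ω, Z ω)) v
      * (logb 2 (probMass μ (fun ω => (X ω, Y ω, Z ω)) v) - logb 2 (condIndepMass μ X Y Z v)) := by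
  set p := probMass μ (fun ω => (X ω, Y ω, Z ω))
  have hV : Measurable fun ω => (X ω, Y ω, Z ω) := hX.prodMk (hY.prodMk hZ)
  have hXZ : shEnt μ (fun ω => (X ω, Z ω))
      = -∑ v, p v * logb 2 (probMass μ (fun ω => (X ω, Z ω)) (v.1, v.2.2)) :=
    shEnt_comp_eq_neg_sum hV fun v => (v.1, v.2.2)
  have hYZ : shEnt μ (fun ω => (Y ω, Z ω))
      = -∑ v, p v * logb 2 (probMass μ (fun ω => (Y ω, Z ω)) v.2) :=
    shEnt_comp_eq_neg_sum hV Prod.snd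
  have hZ : shEnt μ Z = -∑ v, p v * logb 2 (probMass μ Z v.2.2) :=
    shEnt_comp_eq_neg_sum hV fun v => v.2.2
  have hterm (v : S × T × U) : p v * (logb 2 (p v) - logb 2 (condIndepMass μ X Y Z v))
      = p v * logb 2 (p v) + p v * logb 2 (probMass μ Z v.2.2)
        - p v * logb 2 (probMass μ (fun ω => (X ω, Z ω)) (v.1, v.2.2))
        - p v * logb 2 (probMass μ (fun ω => (Y ω, Z ω)) v.2) := by
    rcases (probMass_nonneg (μ := μ) (fun ω => (X ω, Y ω, Z ω)) v).eq_or_lt with hp | hp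
    · simp [p, ← hp]
    have hXZ : probMass μ (fun ω => (X ω, Z ω)) (v.1, v.2.2) ≠ 0 :=
      (probMass_pos_comp (fun v => (v.1, v.2.2)) hp).ne'
    have hYZ : probMass μ (fun ω => (Y ω, Z ω)) v.2 ≠ 0 := (probMass_pos_comp Prod.snd hp).ne'
    have hZ : probMass μ Z v.2.2 ≠ 0 := (probMass_pos_comp (fun v => v.2.2) hp).ne'
    rw [condIndepMass, logb_div (mul_ne_zero hXZ hYZ) hZ, logb_mul hXZ hYZ]
    ring
  simp only [hterm, sum_add_distrib, sum_sub_distrib]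
  rw [condMutInf, hXZ, hYZ, hZ, shEnt_eq_neg_sum_probMass (fun ω => (X ω, Y ω, Z ω))]
  ring

lemma sum_condIndepMass (hX : Measurable X) (hY : Measurable Y) (hZ : Measurable Z) :
    ∑ v, condIndepMass μ X Y Z v = μ.real Set.univ := by
  calc ∑ v, condIndepMass μ X Y Z v
      = ∑ u, (∑ s, probMass μ (fun ω => (X ω, Z ω)) (s, u))
          * (∑ t, probMass μ (fun ω => (Y ω, Z ω)) (t, u)) / probMass μ Z u := by
        simp only [Fintype.sum_prod_type, sum_mul_sum, sum_div, condIndepMass]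
        exact (sum_congr rfl fun s _ => sum_comm).trans sum_comm
    _ = μ.real Set.univ := by
        simp only [sum_probMass_prod_left hX, sum_probMass_prod_left hY, mul_self_div_self,
          sum_probMass hZ]

lemma condMutInf_nonneg (hX : Measurable X) (hY : Measurable Y) (hZ : Measurable Z) :
    0 ≤ condMutInf μ X Y Z := by
  have hV : Measurable fun ω => (X ω, Y ω, Z ω) := hX.prodMk (hY.prodMk hZ)
  have hq (v : S × T × U) : 0 ≤ condIndepMass μ X Y Z v :=
    div_nonneg (mul_nonneg (probMass_nonneg _ _) (probMass_nonneg _ _)) (probMass_nonneg _ _)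
  have hpq (v : S × T × U) (hp : probMass μ (fun ω => (X ω, Y ω, Z ω)) v ≠ 0) :
      condIndepMass μ X Y Z v ≠ 0 := by
    have hp := (probMass_nonneg _ v).lt_of_ne' hp
    exact (div_pos (mul_pos (probMass_pos_comp (fun v => (v.1, v.2.2)) hp)
      (probMass_pos_comp Prod.snd hp)) (probMass_pos_comp (fun v => v.2.2) hp)).ne'
  have hgibbs := sum_mul_logb_le_sum_mul_logb (probMass_nonneg _) hq hpq
    ((sum_condIndepMass hX hY hZ).trans (sum_probMass hV).symm).le
  rw [condMutInf_eq_sum hX hY hZ]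
  simpa only [mul_sub, sum_sub_distrib, sub_nonneg] using hgibbs

end CondMutInf

section CondIndep

variable {Ω : Type*} [mΩ : MeasurableSpace Ω] {μ : Measure Ω} [IsFiniteMeasure μ]
  {U : Type*} [MeasurableSpace U] [MeasurableSingletonClass U] {Z : Ω → U}

/-- `μ⟦C | σ(Z)⟧` is constant on the atom `Z ⁻¹' {Z ω₀}`, so its integral over the atom is this
product. -/
lemma measureReal_inter_preimage_eq_condExp_mul (hZ : Measurable Z) {C : Set Ω}
    (hC : MeasurableSet C) (ω₀ : Ω) :
    μ.real (C ∩ Z ⁻¹' {Z ω₀})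
      = (μ⟦C | MeasurableSpace.comap Z inferInstance⟧) ω₀ * μ.real (Z ⁻¹' {Z ω₀}) := by
  have hV : MeasurableSet[MeasurableSpace.comap Z inferInstance] (Z ⁻¹' {Z ω₀}) :=
    ⟨_, measurableSet_singleton _, rfl⟩
  calc μ.real (C ∩ Z ⁻¹' {Z ω₀}) = ∫ ω in Z ⁻¹' {Z ω₀}, C.indicator 1 ω ∂μ := by
        rw [integral_indicator_one hC, measureReal_restrict_apply hC]
    _ = ∫ ω in Z ⁻¹' {Z ω₀}, (μ⟦C | MeasurableSpace.comap Z inferInstance⟧) ω ∂μ :=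
        (setIntegral_condExp hZ.comap_le ((integrable_const 1).indicator hC) hV).symm
    _ = ∫ _ in Z ⁻¹' {Z ω₀}, (μ⟦C | MeasurableSpace.comap Z inferInstance⟧) ω₀ ∂μ :=
        setIntegral_congr_fun (hZ.comap_le _ hV) fun _ hω =>
          stronglyMeasurable_condExp.measurable.factorsThrough hω
    _ = _ := by rw [setIntegral_const, smul_eq_mul, mul_comm]

lemma measureReal_inter_mul_eq_of_condIndepFun [StandardBorelSpace Ω] {S T : Type*}
    [MeasurableSpace S] [MeasurableSpace T] {X : Ω → S} {Y : Ω → T}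
    (hX : Measurable X) (hY : Measurable Y) (hZ : Measurable Z)
    {hm : MeasurableSpace.comap Z inferInstance ≤ mΩ}
    (h : CondIndepFun (MeasurableSpace.comap Z inferInstance) hm X Y μ)
    {A : Set S} {B : Set T} (hA : MeasurableSet A) (hB : MeasurableSet B) (u : U) :
    μ.real (X ⁻¹' A ∩ Y ⁻¹' B ∩ Z ⁻¹' {u}) * μ.real (Z ⁻¹' {u})
      = μ.real (X ⁻¹' A ∩ Z ⁻¹' {u}) * μ.real (Y ⁻¹' B ∩ Z ⁻¹' {u}) := by
  by_cases hu : μ (Z ⁻¹' {u}) = 0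
  · simp [measureReal_def, hu, measure_mono_null Set.inter_subset_right hu]
  obtain ⟨ω₀, rfl, hω₀⟩ := Measure.exists_mem_of_measure_ne_zero_of_ae hu <| ae_restrict_of_ae <|
    (condIndepFun_iff_condExp_inter_preimage_eq_mul hX hY).mp h A B hA hB
  rw [measureReal_inter_preimage_eq_condExp_mul hZ ((hX hA).inter (hY hB)),
    measureReal_inter_preimage_eq_condExp_mul hZ (hX hA),
    measureReal_inter_preimage_eq_condExp_mul hZ (hY hB), hω₀]
  ring

lemma condMutInf_eq_zero_of_condIndepFun [StandardBorelSpace Ω] {S T : Type*}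
    [Fintype S] [Fintype T] [Fintype U] [MeasurableSpace S] [MeasurableSpace T]
    [MeasurableSingletonClass S] [MeasurableSingletonClass T] {X : Ω → S} {Y : Ω → T}
    (hX : Measurable X) (hY : Measurable Y) (hZ : Measurable Z)
    {hm : MeasurableSpace.comap Z inferInstance ≤ mΩ}
    (h : CondIndepFun (MeasurableSpace.comap Z inferInstance) hm X Y μ) :
    condMutInf μ X Y Z = 0 := by
  refine (condMutInf_eq_sum hX hY hZ).trans (sum_eq_zero fun v _ => ?_)
  rw [condIndepMass_eq_probMass (fun v => ?_), sub_self, mul_zero]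
  obtain ⟨s, t, u⟩ := v
  simpa only [probMass, ← Set.singleton_prod_singleton, Set.mk_preimage_prod, Set.inter_assoc]
    using measureReal_inter_mul_eq_of_condIndepFun hX hY hZ h
      (measurableSet_singleton s) (measurableSet_singleton t) u

end CondIndep

section ChainRule

variable {Ω : Type*} [mΩ : MeasurableSpace Ω] {μ : Measure Ω} {S S' T U V : Type*}
  [Fintype S] [Fintype S'] [Fintype T] [Fintype U] [Fintype V]

lemma condMutInf_comp_left_of_injective {g : S → S'} (hg : Function.Injective g) (X : Ω → S)
    (W : Ω → T) (Z : Ω → U) :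
    condMutInf μ (fun ω => g (X ω)) W Z = condMutInf μ X W Z := by
  have h₁ : shEnt μ (fun ω => (g (X ω), Z ω)) = shEnt μ (fun ω => (X ω, Z ω)) :=
    shEnt_comp_of_injective (hg.prodMap (Function.injective_id (α := U))) fun ω => (X ω, Z ω)
  have h₂ : shEnt μ (fun ω => (g (X ω), W ω, Z ω)) = shEnt μ (fun ω => (X ω, W ω, Z ω)) :=
    shEnt_comp_of_injective (hg.prodMap (Function.injective_id (α := T × U)))
      fun ω => (X ω, W ω, Z ω)
  rw [condMutInf, condMutInf, h₁, h₂]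

lemma condMutInf_prod_left (X : Ω → S) (Y : Ω → V) (W : Ω → T) (Z : Ω → U) :
    condMutInf μ (fun ω => (X ω, Y ω)) W Z
      = condMutInf μ Y W Z + condMutInf μ X W (fun ω => (Y ω, Z ω)) := by
  have h₁ : shEnt μ (fun ω => ((X ω, Y ω), Z ω)) = shEnt μ (fun ω => (X ω, Y ω, Z ω)) :=
    shEnt_comp_of_injective (Equiv.prodAssoc S V U).symm.injective fun ω => (X ω, Y ω, Z ω)
  have h₂ : shEnt μ (fun ω => (W ω, Y ω, Z ω)) = shEnt μ (fun ω => (Y ω, W ω, Z ω)) :=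
    shEnt_comp_of_injective (g := fun r : V × T × U => (r.2.1, r.1, r.2.2))
      (fun _ _ h => by simp_all [Prod.ext_iff]) fun ω => (Y ω, W ω, Z ω)
  have h₃ : shEnt μ (fun ω => ((X ω, Y ω), W ω, Z ω)) = shEnt μ (fun ω => (X ω, W ω, Y ω, Z ω)) :=
    shEnt_comp_of_injective (g := fun r : S × T × V × U => ((r.1, r.2.2.1), r.2.1, r.2.2.2))
      (fun _ _ h => by simp_all [Prod.ext_iff]) fun ω => (X ω, W ω, Y ω, Z ω)
  simp only [condMutInf, h₁, h₂, h₃]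
  ring

lemma mutInf_comp_right_of_injective {g : T → U} (hg : Function.Injective g) (X : Ω → S)
    (Y : Ω → T) : mutInf μ X (fun ω => g (Y ω)) = mutInf μ X Y := by
  have h : shEnt μ (fun ω => (X ω, g (Y ω))) = shEnt μ (fun ω => (X ω, Y ω)) :=
    shEnt_comp_of_injective ((Function.injective_id (α := S)).prodMap hg) fun ω => (X ω, Y ω)
  rw [mutInf, mutInf, shEnt_comp_of_injective hg, h]

lemma mutInf_prod_right (X : Ω → S) (Y : Ω → T) (Z : Ω → U) :
    mutInf μ X (fun ω => (Y ω, Z ω)) = mutInf μ X Z + condMutInf μ X Y Z := by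
  simp only [mutInf, condMutInf]
  ring

lemma mutInf_eq_zero_of_unique [IsProbabilityMeasure μ] [Unique T] (X : Ω → S) (Y : Ω → T) :
    mutInf μ X Y = 0 := by
  have hY : Y = fun _ => default := funext fun ω => Unique.eq_default (Y ω)
  subst hY
  rw [mutInf, shEnt_eq_zero_of_unique (fun _ : Ω => (default : T)),
    shEnt_comp_of_injective (g := fun s : S => (s, (default : T)))
      (fun _ _ h => congrArg Prod.fst h)]
  ring

variable [IsFiniteMeasure μ] [MeasurableSpace S] [MeasurableSpace S'] [MeasurableSpace T]
  [MeasurableSpace U] [MeasurableSingletonClass S] [MeasurableSingletonClass S']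
  [MeasurableSingletonClass T] [MeasurableSingletonClass U]
  {X : Ω → S} {W : Ω → T} {Z : Ω → U}

lemma condMutInf_comp_left_le (hX : Measurable X) (hW : Measurable W) (hZ : Measurable Z)
    (g : S → S') : condMutInf μ (fun ω => g (X ω)) W Z ≤ condMutInf μ X W Z :=
  calc condMutInf μ (fun ω => g (X ω)) W Z
      ≤ condMutInf μ (fun ω => g (X ω)) W Z + condMutInf μ X W (fun ω => (g (X ω), Z ω)) :=
        le_add_of_nonneg_right <|
          condMutInf_nonneg hX hW (((measurable_of_finite g).comp hX).prodMk hZ)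
    _ = condMutInf μ (fun ω => (X ω, g (X ω))) W Z := (condMutInf_prod_left _ _ _ _).symm
    _ = condMutInf μ X W Z :=
        condMutInf_comp_left_of_injective (g := fun s => (s, g s))
          (fun _ _ h => congrArg Prod.fst h) X W Z

lemma condMutInf_le_of_condIndepFun [StandardBorelSpace Ω] {A : Ω → V} [MeasurableSpace V]
    [MeasurableSingletonClass V] (hX : Measurable X) (hA : Measurable A) (hW : Measurable W)
    (hZ : Measurable Z) {hm : MeasurableSpace.comap (fun ω => (A ω, Z ω)) inferInstance ≤ mΩ}
    (h : CondIndepFun (MeasurableSpace.comap (fun ω => (A ω, Z ω)) inferInstance) hm X W μ) :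
    condMutInf μ X W Z ≤ condMutInf μ A W Z :=
  calc condMutInf μ X W Z ≤ condMutInf μ (fun ω => (X ω, A ω)) W Z :=
        condMutInf_comp_left_le (hX.prodMk hA) hW hZ Prod.fst
    _ = condMutInf μ A W Z := by
        rw [condMutInf_prod_left,
          condMutInf_eq_zero_of_condIndepFun hX hW (hA.prodMk hZ) h, add_zero]

lemma mutInf_le_shEnt_left {Y : Ω → T} (hX : Measurable X) (hY : Measurable Y) :
    mutInf μ X Y ≤ shEnt μ X := by
  have hdup : shEnt μ (fun ω => (X ω, X ω, Y ω)) = shEnt μ (fun ω => (X ω, Y ω)) :=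
    shEnt_comp_of_injective (g := fun r : S × T => (r.1, r.1, r.2))
      (fun _ _ h => by simp_all [Prod.ext_iff]) fun ω => (X ω, Y ω)
  have := condMutInf_nonneg (μ := μ) hX hX hY
  rw [condMutInf, hdup] at this
  rw [mutInf]
  linarith

end ChainRule

lemma mutInf_hist_eq_sum_condMutInf {Ω : Type*} [MeasurableSpace Ω] {μ : Measure Ω}
    [IsProbabilityMeasure μ] {S : Type*} [Fintype S] {γ : ℕ → Type*} [∀ t, Fintype (γ t)]
    (X : Ω → S) (w : (t : ℕ) → Ω → γ t) (T : ℕ) :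
    mutInf μ X (hist w T) = ∑ t ∈ range T, condMutInf μ X (w t) (hist w t) := by
  induction T with
  | zero => exact mutInf_eq_zero_of_unique X _
  | succ T ih =>
    have hsnoc : mutInf μ X (fun ω => (w T ω, hist w T ω)) = mutInf μ X (hist w (T + 1)) :=
      mutInf_comp_right_of_injective (Fin.snocEquiv fun i : Fin (T + 1) => γ i).symm.injective
        X (hist w (T + 1))
    rw [sum_range_succ, ← ih, ← hsnoc, mutInf_prod_right]

lemma logb_card_pi_fin {A : ℕ → Type*} [∀ t, Fintype (A t)] [∀ t, Nonempty (A t)] (T : ℕ) :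
    logb 2 (Fintype.card ((i : Fin T) → A i)) = ∑ t ∈ range T, logb 2 (Fintype.card (A t)) := by
  rw [Fintype.card_pi, Nat.cast_prod, logb_prod _ _ fun t _ => by positivity,
    Fin.sum_univ_eq_sum_range (fun t => logb 2 (Fintype.card (A t)))]

theorem rate_converse_causal_coding_decoder_SI_general
    {Ω : Type*} [MeasurableSpace Ω] [StandardBorelSpace Ω]
    (μ : Measure Ω) [IsProbabilityMeasure μ]
    (T : ℕ) {α γ : ℕ → Type*} {A : ℕ → Type*}
    [∀ t, Fintype (α t)] [∀ t, Fintype (γ t)] [∀ t, Fintype (A t)]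
    [∀ t, MeasurableSpace (α t)] [∀ t, MeasurableSpace (γ t)] [∀ t, MeasurableSpace (A t)]
    [∀ t, MeasurableSingletonClass (α t)] [∀ t, MeasurableSingletonClass (γ t)]
    [∀ t, MeasurableSingletonClass (A t)]
    (x : (t : ℕ) → Ω → α t) (w : (t : ℕ) → Ω → γ t) (a : (t : ℕ) → Ω → A t)
    (hx : ∀ t, Measurable (x t)) (hw : ∀ t, Measurable (w t)) (ha : ∀ t, Measurable (a t))
    (hMarkov : ∀ t < T,
      CondIndepFun
        (MeasurableSpace.comap (fun ω => (hist a (t + 1) ω, hist w t ω)) inferInstance)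
        (((hist_measurable a ha (t + 1)).prodMk (hist_measurable w hw t)).comap_le)
        (fun ω => (hist x (t + 1) ω, hist a t ω)) (w t) μ) :
    ∑ t ∈ range T, Real.logb 2 (Fintype.card (A t))
      ≥ ∑ t ∈ range T, condMutInf μ (hist x (t + 1)) (w t) (hist w t) := by
  have hx' := hist_measurable x hx
  have ha' := hist_measurable a ha
  have hw' := hist_measurable w hw
  have : ∀ t, Nonempty (A t) := fun t => ⟨a t (nonempty_of_isProbabilityMeasure μ).some⟩
  have step (t : ℕ) (ht : t < T) : condMutInf μ (hist x (t + 1)) (w t) (hist w t)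
      ≤ condMutInf μ (hist a T) (w t) (hist w t) :=
    calc condMutInf μ (hist x (t + 1)) (w t) (hist w t)
        ≤ condMutInf μ (fun ω => (hist x (t + 1) ω, hist a t ω)) (w t) (hist w t) :=
          condMutInf_comp_left_le ((hx' _).prodMk (ha' _)) (hw t) (hw' t) Prod.fst
      _ ≤ condMutInf μ (hist a (t + 1)) (w t) (hist w t) :=
          condMutInf_le_of_condIndepFun ((hx' _).prodMk (ha' _)) (ha' _) (hw t) (hw' t)
            (hMarkov t ht)
      _ ≤ condMutInf μ (hist a T) (w t) (hist w t) :=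
          condMutInf_comp_left_le (ha' T) (hw t) (hw' t) fun b i => b (Fin.castLE ht i)
  calc ∑ t ∈ range T, condMutInf μ (hist x (t + 1)) (w t) (hist w t)
      ≤ ∑ t ∈ range T, condMutInf μ (hist a T) (w t) (hist w t) :=
        sum_le_sum fun t ht => step t (mem_range.mp ht)
    _ = mutInf μ (hist a T) (hist w T) := (mutInf_hist_eq_sum_condMutInf _ w T).symm
    _ ≤ shEnt μ (hist a T) := mutInf_le_shEnt_left (ha' T) (hw' T)
    _ ≤ logb 2 (Fintype.card ((i : Fin T) → A i)) := shEnt_le_logb_card (ha' T)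
    _ = ∑ t ∈ range T, logb 2 (Fintype.card (A t)) := logb_card_pi_fin T

/-- Rate converse for causal source coding with decoder side information: if each packet `a_t`
is a deterministic causal function of `x^t` (i.e. measurable w.r.t. the σ-algebra generated by
`x^t`), and for every `t` the pair `(x^t, a^{t-1})` is conditionally independent of `w_t` given
`(a^t, w^{t-1})`, then the total rate `Σ_t log₂ |A_t|` is at least the directed information
`I(x^T → w^T)`. -/
theorem rate_converse_causal_coding_decoder_SI
    {Ω : Type*} [MeasurableSpace Ω] [StandardBorelSpace Ω]
    (μ : Measure Ω) [IsProbabilityMeasure μ]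
    (T : ℕ) {α γ : ℕ → Type*} {A : ℕ → Type*}
    [∀ t, Fintype (α t)] [∀ t, Fintype (γ t)] [∀ t, Fintype (A t)]
    [∀ t, MeasurableSpace (α t)] [∀ t, MeasurableSpace (γ t)] [∀ t, MeasurableSpace (A t)]
    [∀ t, MeasurableSingletonClass (α t)] [∀ t, MeasurableSingletonClass (γ t)]
    [∀ t, MeasurableSingletonClass (A t)]
    (x : (t : ℕ) → Ω → α t) (w : (t : ℕ) → Ω → γ t) (a : (t : ℕ) → Ω → A t)
    (hx : ∀ t, Measurable (x t)) (hw : ∀ t, Measurable (w t)) (ha : ∀ t, Measurable (a t))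
    (h_enc : ∀ t, Measurable[MeasurableSpace.comap (hist x (t + 1)) inferInstance] (a t))
    (hMarkov : ∀ t < T,
      CondIndepFun
        (MeasurableSpace.comap (fun ω => (hist a (t + 1) ω, hist w t ω)) inferInstance)
        (((hist_measurable a ha (t + 1)).prodMk (hist_measurable w hw t)).comap_le)
        (fun ω => (hist x (t + 1) ω, hist a t ω)) (w t) μ) :
    ∑ t ∈ range T, Real.logb 2 (Fintype.card (A t))
      ≥ ∑ t ∈ range T, condMutInf μ (hist x (t + 1)) (w t) (hist w t) :=
  rate_converse_causal_coding_decoder_SI_general μ T x w a hx hw ha hMarkov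
end

section
/- Convergence of the distortion recursion to its steady state: Let λ ∈ ℝ and σ_v, σ_n, σ_z > 0, and define f : [0, ∞) → [0, ∞) by f(D) = (1/σ_n² + 1/σ_z² + 1/(λ² D + σ_v²))^{-1}. Then f is monotone nondecreasing and bounded above by σ_n² ‖ σ_z², the sequence defined by D_0 = 0 and D_{t+1} = f(D_t) is monotone nondecreasing and bounded, f has a unique fixed point D* in [0, ∞), and D_t converges to D* as t → ∞. -/
open Filter

/-- Convergence of the distortion recursion to its steady state: the map
`f(D) = (1/σ_n² + 1/σ_z² + 1/(λ² D + σ_v²))⁻¹` is monotone nondecreasing on `[0,∞)` and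
bounded above by `σ_n² ‖ σ_z²`; the sequence `D_0 = 0`, `D_{t+1} = f(D_t)` is monotone
nondecreasing and bounded; `f` has a unique fixed point `D*` in `[0,∞)`; and `D_t → D*`. -/
theorem distortion_recursion_convergence
    (l σv σn σz : ℝ) (hσv : 0 < σv) (hσn : 0 < σn) (hσz : 0 < σz)
    (f : ℝ → ℝ)
    (hf : ∀ d, 0 ≤ d → f d = (1 / σn ^ 2 + 1 / σz ^ 2 + 1 / (l ^ 2 * d + σv ^ 2))⁻¹)
    (D : ℕ → ℝ) (hD0 : D 0 = 0) (hDrec : ∀ t, D (t + 1) = f (D t)) :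
    MonotoneOn f (Set.Ici 0)
      ∧ (∀ d, 0 ≤ d → f d ≤ σn ^ 2 * σz ^ 2 / (σn ^ 2 + σz ^ 2))
      ∧ Monotone D
      ∧ (∃ C : ℝ, ∀ t, D t ≤ C)
      ∧ ∃ Dstar : ℝ, (0 ≤ Dstar ∧ f Dstar = Dstar)
          ∧ (∀ D' : ℝ, 0 ≤ D' ∧ f D' = D' → D' = Dstar)
          ∧ Tendsto D atTop (nhds Dstar) := by
  have hσv2 : (0:ℝ) < σv ^ 2 := by positivity
  set a : ℝ := 1 / σn ^ 2 + 1 / σz ^ 2 with ha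
  have ha0 : 0 < a := by positivity
  have hx : ∀ d : ℝ, 0 ≤ d → 0 < l ^ 2 * d + σv ^ 2 := by
    intro d hd
    have : 0 ≤ l ^ 2 * d := mul_nonneg (sq_nonneg l) hd
    linarith
  have hsum : ∀ d : ℝ, 0 ≤ d → 0 < a + 1 / (l ^ 2 * d + σv ^ 2) := by
    intro d hd
    have := hx d hd
    positivity
  -- positivity of f
  have hfpos : ∀ d : ℝ, 0 ≤ d → 0 < f d := by
    intro d hd
    rw [hf d hd]
    exact inv_pos.2 (hsum d hd)
  -- monotonicity of f
  have hmono : MonotoneOn f (Set.Ici 0) := by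
    intro x hx' y hy' hxy
    simp only [Set.mem_Ici] at hx' hy'
    rw [hf x hx', hf y hy']
    have h1 := hx x hx'
    have h2 := hx y hy'
    gcongr
  -- bound on f
  have hbound : ∀ d : ℝ, 0 ≤ d → f d ≤ σn ^ 2 * σz ^ 2 / (σn ^ 2 + σz ^ 2) := by
    intro d hd
    have hinv : f d ≤ a⁻¹ := by
      rw [hf d hd]
      have h1 := hx d hd
      have h0 : 0 < 1 / (l ^ 2 * d + σv ^ 2) := by positivity
      have : a ≤ a + 1 / (l ^ 2 * d + σv ^ 2) := by linarith
      exact inv_anti₀ ha0 this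
    have : a⁻¹ = σn ^ 2 * σz ^ 2 / (σn ^ 2 + σz ^ 2) := by
      rw [ha]; field_simp; ring
    linarith [hinv, this.symm.le, this ▸ hinv]
  -- nonnegativity of D
  have hDnn : ∀ t, 0 ≤ D t := by
    intro t
    induction t with
    | zero => rw [hD0]
    | succ n ih => rw [hDrec n]; exact (hfpos _ ih).le
  -- monotonicity of D
  have hDmono : Monotone D := by
    apply monotone_nat_of_le_succ
    intro t
    induction t with
    | zero => rw [hD0, hDrec 0]; exact (hfpos _ (le_of_eq hD0.symm)).le
    | succ n ih =>
        rw [hDrec n, hDrec (n+1)]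
        exact hmono (hDnn n) (hDnn (n+1)) ih
  -- boundedness of D
  have hDbdd : ∀ t, D t ≤ σn ^ 2 * σz ^ 2 / (σn ^ 2 + σz ^ 2) := by
    intro t
    cases t with
    | zero => rw [hD0]; positivity
    | succ n => rw [hDrec n]; exact hbound _ (hDnn n)
  -- limit
  set Dstar : ℝ := ⨆ t, D t with hDs
  have hBdd : BddAbove (Set.range D) :=
    ⟨σn ^ 2 * σz ^ 2 / (σn ^ 2 + σz ^ 2), by rintro _ ⟨t, rfl⟩; exact hDbdd t⟩
  have htend : Tendsto D atTop (nhds Dstar) := tendsto_atTop_ciSup hDmono hBdd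
  have hDs0 : 0 ≤ Dstar := by
    have := le_ciSup hBdd 0
    rw [hD0] at this; exact this
  -- f Dstar = Dstar by continuity
  have hfix : f Dstar = Dstar := by
    set g : ℝ → ℝ := fun d => (a + 1 / (l ^ 2 * d + σv ^ 2))⁻¹ with hg
    have hcont : ContinuousAt g Dstar := by
      apply ContinuousAt.inv₀
      · apply ContinuousAt.add continuousAt_const
        apply ContinuousAt.div continuousAt_const (by fun_prop)
        exact (hx _ hDs0).ne'
      · exact (hsum _ hDs0).ne'
    have h1 : Tendsto (fun t => g (D t)) atTop (nhds (g Dstar)) :=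
      hcont.tendsto.comp htend
    have h2 : (fun t => g (D t)) = fun t => D (t + 1) := by
      funext t
      rw [hDrec t, hf _ (hDnn t)]
    rw [h2] at h1
    have h3 : Tendsto (fun t => D (t + 1)) atTop (nhds Dstar) :=
      htend.comp (tendsto_add_atTop_nat 1)
    have := tendsto_nhds_unique h1 h3
    rw [hf _ hDs0]
    simpa [hg, ha] using this
  -- polynomial form of fixed point equation
  have hpoly : ∀ x : ℝ, 0 ≤ x → f x = x →
      a * l ^ 2 * x ^ 2 + (a * σv ^ 2 + 1 - l ^ 2) * x - σv ^ 2 = 0 := by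
    intro x hx0 hfx
    have hxp := hx x hx0
    have hsp := hsum x hx0
    rw [hf x hx0] at hfx
    have h1 : x * (a + 1 / (l ^ 2 * x + σv ^ 2)) = 1 := by
      nth_rewrite 1 [← hfx]
      exact inv_mul_cancel₀ hsp.ne'
    field_simp at h1
    linear_combination h1
  refine ⟨hmono, hbound, hDmono, ⟨_, hDbdd⟩, Dstar, ⟨hDs0, hfix⟩, ?_, htend⟩
  intro D' ⟨hD'0, hD'fix⟩
  have e1 := hpoly D' hD'0 hD'fix
  have e2 := hpoly Dstar hDs0 hfix
  have key : (D' - Dstar) * (a * l ^ 2 * (D' + Dstar) + a * σv ^ 2 + 1 - l ^ 2) = 0 := by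
    linear_combination e1 - e2
  rcases mul_eq_zero.1 key with h | h
  · linarith
  · exfalso
    have h2 : (a * l ^ 2 * (D' + Dstar) + a * σv ^ 2 + 1 - l ^ 2) * D' = 0 := by
      rw [h]; ring
    have hprod : a * l ^ 2 * D' * Dstar = -σv ^ 2 := by linear_combination h2 - e1
    nlinarith [mul_nonneg (mul_nonneg (mul_nonneg ha0.le (sq_nonneg l)) hD'0) hDs0]
end
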